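/- Let G be a connected, bipartite, k-regular finite simple graph with k ≥ 3. Then the strong matching preclusion number of G equals 2, and every optimal strong matching preclusion set of G is a set of two vertices from the same bipartition class of G. -/

import Mathlib

/-!
In a `k`-regular bipartite graph a set `s` inside one class meets exactly `k |s|` edges, and all of
them end in its neighbourhood `N(s)`, which meets at most `k |N(s)|` edges. Hence after deleting
fewer than `k` edges Hall's condition still holds on either class, which gives a perfect matching,
and, after deleting one more vertex, an almost-perfect matching; so `smp(G) ≥ 2`. Deleting two
vertices of one class leaves classes whose sizes differ by two, which no matching can overcome, so
`smp(G) = 2`. Finally, deleting `u ∈ V₁` and `v ∈ V₂` leaves a perfect matching: a set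
`s ⊆ V₁ \ {u}` with `|N(s)| ≤ |s|` would force the edges at `N(s)` to be exactly the edges at `s`,
so `s ∪ N(s)` would be closed under adjacency and, by connectivity, contain `u`.
-/

/-- The generating relation of the bubble-sort star graph: `u = v ∘ ⟨1,i⟩` for some
`i ∈ [2,n]` (0-based: swap of positions `0` and `i` with `i ≠ 0`), or `u = v ∘ ⟨i-1,i⟩`
for some `i ∈ [3,n]` (0-based: swap of consecutive positions `i, j = i+1` with `i ≥ 1`). -/
def bssRel (n : ℕ) (u v : Equiv.Perm (Fin n)) : Prop :=
  (∃ i : Fin n, (i : ℕ) ≠ 0 ∧ u = v * Equiv.swap ⟨0, i.pos⟩ i) ∨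
  (∃ i j : Fin n, (i : ℕ) + 1 = (j : ℕ) ∧ 1 ≤ (i : ℕ) ∧ u = v * Equiv.swap i j)

/-- The `n`-dimensional bubble-sort star graph `BS_n`, on the permutations of `{1,…,n}`. -/
def BS (n : ℕ) : SimpleGraph (Equiv.Perm (Fin n)) := SimpleGraph.fromRel (bssRel n)

/-- A set of edges `M` is a perfect matching of `G`: `M` consists of edges of `G` and
every vertex lies in exactly one edge of `M`. -/
def IsPM {V : Type*} (G : SimpleGraph V) (M : Set (Sym2 V)) : Prop :=
  M ⊆ G.edgeSet ∧ ∀ v : V, ∃! e : Sym2 V, e ∈ M ∧ v ∈ e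

/-- A set of edges `M` is an almost-perfect matching of `G`: there is exactly one
vertex lying in no edge of `M`, and every other vertex lies in exactly one edge of `M`. -/
def IsAPM {V : Type*} (G : SimpleGraph V) (M : Set (Sym2 V)) : Prop :=
  M ⊆ G.edgeSet ∧ ∃ w : V, (∀ e ∈ M, w ∉ e) ∧ ∀ v : V, v ≠ w → ∃! e : Sym2 V, e ∈ M ∧ v ∈ e

/-- `G` has neither a perfect matching nor an almost-perfect matching. -/
def HasNoMatchings {V : Type*} (G : SimpleGraph V) : Prop :=
  (¬ ∃ M, IsPM G M) ∧ (¬ ∃ M, IsAPM G M)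

/-- `(S, F)` is a strong matching preclusion set of `G`: deleting the vertices of `S`
(with all incident edges) and the edges of `F` leaves a graph with neither a perfect
matching nor an almost-perfect matching. -/
def IsSMPSet {V : Type*} (G : SimpleGraph V) (S : Set V) (F : Set (Sym2 V)) : Prop :=
  F ⊆ G.edgeSet ∧ HasNoMatchings ((G.deleteEdges F).induce (Sᶜ : Set V))

/-- `F` is a matching preclusion set of `G`: `G - F` has neither a perfect matching
nor an almost-perfect matching. -/
def IsMPSet {V : Type*} (G : SimpleGraph V) (F : Set (Sym2 V)) : Prop :=
  F ⊆ G.edgeSet ∧ HasNoMatchings (G.deleteEdges F)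

/-- `BS_n^i`: the set of permutations whose last entry equals `i`. -/
def BSslice {n : ℕ} (i : Fin n) : Set (Equiv.Perm (Fin n)) :=
  {a | a ⟨n - 1, Nat.sub_lt i.pos Nat.one_pos⟩ = i}

/-- `(V₁, V₂)` is a bipartition of `G`: the two classes partition the vertices and every
edge has one end in each class. -/
def Bipartition {V : Type*} (G : SimpleGraph V) (V1 V2 : Set V) : Prop :=
  Disjoint V1 V2 ∧ V1 ∪ V2 = Set.univ ∧
    ∀ ⦃u v⦄, G.Adj u v → (u ∈ V1 ∧ v ∈ V2) ∨ (u ∈ V2 ∧ v ∈ V1)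

open Set

section Matchings

variable {U : Type*} {H : SimpleGraph U} {M : Set (Sym2 U)} {W s t : Set U}

def IsMatchingOn (H : SimpleGraph U) (M : Set (Sym2 U)) (W : Set U) : Prop :=
  M ⊆ H.edgeSet ∧ (∀ v ∈ W, ∃! e, e ∈ M ∧ v ∈ e) ∧ ∀ e ∈ M, ∀ v ∈ e, v ∈ W

lemma isPM_iff_isMatchingOn_univ : IsPM H M ↔ IsMatchingOn H M univ := by
  simp [IsPM, IsMatchingOn]

lemma isAPM_iff_exists_isMatchingOn : IsAPM H M ↔ ∃ w, IsMatchingOn H M {w}ᶜ := by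
  simp only [IsAPM, IsMatchingOn, mem_compl_iff, mem_singleton_iff]
  constructor
  · rintro ⟨hMH, w, hw, hcov⟩
    exact ⟨w, hMH, hcov, fun e he v hv hvw => hw e he (hvw ▸ hv)⟩
  · rintro ⟨w, hMH, hcov, hend⟩
    exact ⟨hMH, w, fun e he hw => hend e he w hw rfl, hcov⟩

lemma SimpleGraph.Subgraph.IsMatching.isMatchingOn {M : H.Subgraph} (hM : M.IsMatching) :
    IsMatchingOn H M.edgeSet M.verts := by
  refine ⟨M.edgeSet_subset, fun v hv => ?_, fun e he v hv => M.mem_verts_of_mem_edge he hv⟩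
  obtain ⟨w, hvw, huniq⟩ := hM hv
  refine ⟨s(v, w), ⟨hvw, Sym2.mem_mk_left v w⟩, fun e ⟨he, hve⟩ => ?_⟩
  rw [← Sym2.other_spec hve] at he ⊢
  rw [huniq _ (M.mem_edgeSet.1 he)]

lemma SimpleGraph.IsBipartiteWith.eq_of_mem_edgeSet (hbip : H.IsBipartiteWith s t) {e : Sym2 U}
    (he : e ∈ H.edgeSet) {a b : U} (hae : a ∈ e) (hbe : b ∈ e) (ha : a ∈ s) (hb : b ∈ s) :
    a = b := by
  induction e using Sym2.ind with
  | _ x y =>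
    have hxy : ¬(x ∈ s ∧ y ∈ s) := fun ⟨hx, hy⟩ =>
      hbip.disjoint.notMem_of_mem_left hy (hbip.mem_of_mem_adj hx he)
    rcases Sym2.mem_iff.1 hae with rfl | rfl <;> rcases Sym2.mem_iff.1 hbe with rfl | rfl <;> tauto

lemma IsMatchingOn.ncard_inter_eq_ncard (hbip : H.IsBipartiteWith s t)
    (hM : IsMatchingOn H M W) : (s ∩ W).ncard = M.ncard := by
  obtain ⟨hMH, hcov, hend⟩ := hM
  choose e he using fun v hv => (hcov v hv).exists
  refine ncard_congr (fun v hv => e v hv.2) (fun v hv => (he v hv.2).1) ?_ ?_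
  · intro a b ha hb hab
    exact hbip.eq_of_mem_edgeSet (hMH (he a ha.2).1) (he a ha.2).2 (hab ▸ (he b hb.2).2)
      ha.1 hb.1
  · intro m hm
    induction m using Sym2.ind with
    | _ x y =>
      rcases hbip.mem_of_adj (hMH hm) with ⟨hx, -⟩ | ⟨-, hy⟩
      · have hxW := hend _ hm x (Sym2.mem_mk_left x y)
        exact ⟨x, ⟨hx, hxW⟩, (hcov x hxW).unique (he x hxW) ⟨hm, Sym2.mem_mk_left x y⟩⟩
      · have hyW := hend _ hm y (Sym2.mem_mk_right x y)
        exact ⟨y, ⟨hy, hyW⟩, (hcov y hyW).unique (he y hyW) ⟨hm, Sym2.mem_mk_right x y⟩⟩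

lemma IsMatchingOn.ncard_inter_eq (hbip : H.IsBipartiteWith s t) (hM : IsMatchingOn H M W) :
    (s ∩ W).ncard = (t ∩ W).ncard := by
  rw [hM.ncard_inter_eq_ncard hbip, hM.ncard_inter_eq_ncard hbip.symm]

end Matchings

section Induce

variable {V : Type*} {H : SimpleGraph V} {V1 V2 S : Set V}

lemma SimpleGraph.IsBipartiteWith.induce (hbip : H.IsBipartiteWith V1 V2) (W : Set V) :
    (H.induce W).IsBipartiteWith (Subtype.val ⁻¹' V1) (Subtype.val ⁻¹' V2) :=
  ⟨hbip.disjoint.preimage _, fun _ _ hadj => hbip.mem_of_adj hadj⟩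

lemma ncard_preimage_val_compl (A S : Set V) :
    (Subtype.val ⁻¹' A : Set (Sᶜ : Set V)).ncard = (A \ S).ncard := by
  rw [← ncard_image_of_injective _ Subtype.val_injective, Subtype.image_preimage_coe,
    inter_comm, sdiff_eq]

lemma hasNoMatchings_induce_compl_of_ncard_add_two_le (hbip : H.IsBipartiteWith V1 V2)
    (hcard : (V1 \ S).ncard + 2 ≤ (V2 \ S).ncard) : HasNoMatchings (H.induce Sᶜ) := by
  have hbip' := hbip.induce Sᶜ
  constructor
  · rintro ⟨M, hM⟩
    have := (isPM_iff_isMatchingOn_univ.1 hM).ncard_inter_eq hbip'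
    simp only [inter_univ, ncard_preimage_val_compl] at this
    omega
  · rintro ⟨M, hM⟩
    obtain ⟨w, hw⟩ := isAPM_iff_exists_isMatchingOn.1 hM
    have hcount := hw.ncard_inter_eq hbip'
    rw [← sdiff_eq, ← sdiff_eq] at hcount
    have h1 := ncard_sdiff_singleton_le (Subtype.val ⁻¹' V1 : Set (Sᶜ : Set V)) w
    have h2 := pred_ncard_le_ncard_sdiff_singleton (Subtype.val ⁻¹' V2 : Set (Sᶜ : Set V)) w
    rw [ncard_preimage_val_compl] at h1 h2
    omega

lemma exists_isMatching_induce_compl [Fintype V] (hbip : H.IsBipartiteWith V1 V2)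
    (hall : ∀ s ⊆ V1 \ S, s.ncard ≤ ((⋃ x ∈ s, H.neighborSet x) \ S).ncard) :
    ∃ M : (H.induce Sᶜ).Subgraph, Subtype.val ⁻¹' V1 ⊆ M.verts ∧ M.IsMatching := by
  classical
  refine SimpleGraph.exists_isMatching_of_forall_ncard_le (hbip.induce Sᶜ) fun s hs => ?_
  have hval : Subtype.val '' (⋃ x ∈ s, (H.induce Sᶜ).neighborSet x) =
      (⋃ x ∈ Subtype.val '' s, H.neighborSet x) \ S := by
    ext y
    simp only [mem_image, mem_iUnion, SimpleGraph.mem_neighborSet, SimpleGraph.comap_adj,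
      Function.Embedding.coe_subtype, exists_prop, Subtype.exists, mem_sdiff]
    aesop
  calc s.ncard = (Subtype.val '' s).ncard :=
        (ncard_image_of_injective _ Subtype.val_injective).symm
    _ ≤ ((⋃ x ∈ Subtype.val '' s, H.neighborSet x) \ S).ncard :=
      hall _ (by rintro _ ⟨x, hx, rfl⟩; exact ⟨hs hx, x.2⟩)
    _ = _ := by rw [← hval, ncard_image_of_injective _ Subtype.val_injective]

lemma not_hasNoMatchings_induce_compl_of_hall [Fintype V] (hbip : H.IsBipartiteWith V1 V2)
    (hcover : V1 ∪ V2 = univ)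
    (hall : ∀ s ⊆ V1 \ S, s.ncard ≤ ((⋃ x ∈ s, H.neighborSet x) \ S).ncard)
    (hcard : (V2 \ S).ncard ≤ (V1 \ S).ncard + 1) : ¬HasNoMatchings (H.induce Sᶜ) := by
  rintro ⟨hnoPM, hnoAPM⟩
  -- `M` saturates `V₁ \ S`, so by counting it misses at most one vertex of `V₂ \ S`
  obtain ⟨M, hV1, hM⟩ := exists_isMatching_induce_compl hbip hall
  set p₁ : Set (Sᶜ : Set V) := Subtype.val ⁻¹' V1
  set p₂ : Set (Sᶜ : Set V) := Subtype.val ⁻¹' V2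
  have hcount : p₁.ncard = (p₂ ∩ M.verts).ncard := by
    rw [← inter_eq_left.2 hV1]
    exact hM.isMatchingOn.ncard_inter_eq (hbip.induce Sᶜ)
  have hp : ∀ v, v ∈ p₁ ∨ v ∈ p₂ := fun v => eq_univ_iff_forall.1 hcover v
  by_cases hp₂ : p₂ ⊆ M.verts
  · have hverts : M.verts = univ :=
      eq_univ_of_forall fun v => (hp v).elim (fun h => hV1 h) (fun h => hp₂ h)
    exact hnoPM ⟨M.edgeSet, isPM_iff_isMatchingOn_univ.2 (hverts ▸ hM.isMatchingOn)⟩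
  obtain ⟨w, hw₂, hwM⟩ := not_subset.1 hp₂
  have hp₂M : p₂ ∩ M.verts = p₂ \ {w} := by
    refine eq_of_subset_of_ncard_le (fun v hv => ⟨hv.1, fun h => hwM (h ▸ hv.2)⟩) ?_
    rw [ncard_sdiff_singleton_of_mem hw₂, ← hcount, ncard_preimage_val_compl,
      ncard_preimage_val_compl]
    omega
  have hverts : M.verts = {w}ᶜ := by
    refine Subset.antisymm (fun v hv h => hwM (h ▸ hv)) fun v hvw =>
      (hp v).elim (fun h => hV1 h) fun h => (hp₂M.ge ⟨h, hvw⟩).2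
  exact hnoAPM ⟨M.edgeSet, isAPM_iff_exists_isMatchingOn.2 ⟨w, hverts ▸ hM.isMatchingOn⟩⟩

end Induce

namespace SimpleGraph

variable {V : Type*} {G H : SimpleGraph V} {V1 V2 : Set V}

lemma IsBipartiteWith.mono (hbip : G.IsBipartiteWith V1 V2) (hHG : H ≤ G) :
    H.IsBipartiteWith V1 V2 :=
  ⟨hbip.disjoint, fun _ _ hadj => hbip.mem_of_adj (hHG hadj)⟩

lemma IsBipartiteWith.iUnion_neighborSet_subset (hbip : G.IsBipartiteWith V1 V2) {s : Set V}
    (hs : s ⊆ V1) : ⋃ x ∈ s, G.neighborSet x ⊆ V2 :=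
  iUnion₂_subset fun _ hx => isBipartiteWith_neighborSet_subset hbip (hs hx)

lemma Preconnected.mem_of_forall_adj (hG : G.Preconnected) {A : Set V}
    (hA : ∀ x y, G.Adj x y → x ∈ A → y ∈ A) {a b : V} (ha : a ∈ A) : b ∈ A := by
  obtain ⟨p⟩ := hG a b
  induction p with
  | nil => exact ha
  | cons hadj _ ih => exact ih (hA _ _ hadj ha)

variable [Fintype V] [DecidableRel G.Adj] {k : ℕ}

lemma isRegularOfDegree_of_ncard_neighborSet
    (hreg : ∀ v, (G.neighborSet v).ncard = k) : G.IsRegularOfDegree k := fun v => by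
  rw [← hreg v, ← card_neighborFinset_eq_degree, neighborFinset_def, ncard_eq_toFinset_card']

lemma IsRegularOfDegree.ncard_eq_ncard (hreg : G.IsRegularOfDegree k) (hk : 0 < k)
    (hbip : G.IsBipartiteWith V1 V2) : V1.ncard = V2.ncard := by
  classical
  have hsum := isBipartiteWith_sum_degrees_eq (s := V1.toFinset) (t := V2.toFinset)
    (by simpa using hbip)
  simp only [hreg.degree_eq, Finset.sum_const, smul_eq_mul] at hsum
  rw [ncard_eq_toFinset_card', ncard_eq_toFinset_card']
  exact Nat.eq_of_mul_eq_mul_right hk hsum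

lemma IsRegularOfDegree.card_biUnion_incidenceFinset_le [DecidableEq V]
    (hreg : G.IsRegularOfDegree k) (s : Finset V) :
    (s.biUnion fun a => G.incidenceFinset a).card ≤ k * s.card := by
  rw [mul_comm]
  exact Finset.card_biUnion_le_card_mul _ _ _ fun a _ =>
    (card_incidenceFinset_eq_degree ..).trans (hreg.degree_eq a) |>.le

lemma IsRegularOfDegree.card_biUnion_incidenceFinset [DecidableEq V]
    (hreg : G.IsRegularOfDegree k) (hbip : G.IsBipartiteWith V1 V2) {s : Finset V}
    (hs : ↑s ⊆ V1) :
    (s.biUnion fun a => G.incidenceFinset a).card = k * s.card := by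
  rw [Finset.card_biUnion]
  · simp [card_incidenceFinset_eq_degree, hreg.degree_eq, mul_comm]
  · intro a ha b hb hab
    have hnadj : ¬G.Adj a b := fun h =>
      hbip.disjoint.notMem_of_mem_left (hs hb) (hbip.mem_of_mem_adj (hs ha) h)
    rw [Function.onFun, ← Finset.disjoint_coe, coe_incidenceFinset, coe_incidenceFinset,
      Set.disjoint_iff_inter_eq_empty]
    exact G.incidenceSet_inter_incidenceSet_of_not_adj hnadj hab

lemma mem_biUnion_incidenceFinset [DecidableEq V] {s : Finset V} {e : Sym2 V} :
    e ∈ s.biUnion (fun a => G.incidenceFinset a) ↔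
      ∃ a ∈ s, ∃ b, G.Adj a b ∧ e = s(a, b) := by
  simp only [Finset.mem_biUnion, mem_incidenceFinset]
  constructor
  · rintro ⟨a, ha, hae⟩
    refine ⟨a, ha, _, ?_, (Sym2.other_spec hae.2).symm⟩
    rwa [← mk'_mem_incidenceSet_left_iff, Sym2.other_spec hae.2]
  · rintro ⟨a, ha, b, hab, rfl⟩
    exact ⟨a, ha, (G.mk'_mem_incidenceSet_left_iff).2 hab⟩

lemma iUnion_neighborSet_eq_coe_biUnion [DecidableEq V] (H : SimpleGraph V)
    [DecidableRel H.Adj] (s : Finset V) :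
    ⋃ x ∈ (s : Set V), H.neighborSet x = ↑(s.biUnion fun x => H.neighborFinset x) := by
  simp [coe_neighborFinset]

lemma IsRegularOfDegree.ncard_le_ncard_iUnion_neighborSet_deleteEdges
    (hreg : G.IsRegularOfDegree k) (hbip : G.IsBipartiteWith V1 V2) {F : Set (Sym2 V)}
    (hF : F.ncard < k) {s : Set V} (hs : s ⊆ V1) :
    s.ncard ≤ (⋃ x ∈ s, (G.deleteEdges F).neighborSet x).ncard := by
  classical
  lift s to Finset V using s.toFinite
  set T := s.biUnion fun x => (G.deleteEdges F).neighborFinset x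
  rw [iUnion_neighborSet_eq_coe_biUnion, ncard_coe_finset, ncard_coe_finset]
  have hsub : (s.biUnion fun a => G.incidenceFinset a) ⊆
      F.toFinset ∪ T.biUnion fun b => G.incidenceFinset b := by
    intro e he
    obtain ⟨a, ha, b, hab, rfl⟩ := mem_biUnion_incidenceFinset.1 he
    by_cases heF : s(a, b) ∈ F
    · exact Finset.mem_union_left _ (mem_toFinset.2 heF)
    have hbT : b ∈ T :=
      Finset.mem_biUnion.2 ⟨a, ha, by simpa using deleteEdges_adj.2 ⟨hab, heF⟩⟩
    exact Finset.mem_union_right _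
      (mem_biUnion_incidenceFinset.2 ⟨b, hbT, a, hab.symm, Sym2.eq_swap⟩)
  have hcount : k * s.card < k * (T.card + 1) :=
    calc k * s.card = (s.biUnion fun a => G.incidenceFinset a).card :=
          (hreg.card_biUnion_incidenceFinset hbip hs).symm
      _ ≤ F.toFinset.card + (T.biUnion fun b => G.incidenceFinset b).card :=
          (Finset.card_le_card hsub).trans (Finset.card_union_le _ _)
      _ ≤ F.ncard + k * T.card := by
          rw [ncard_eq_toFinset_card']
          exact Nat.add_le_add_left (hreg.card_biUnion_incidenceFinset_le T) _
      _ < k * (T.card + 1) := by rw [mul_add_one]; omega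
  exact Nat.le_of_lt_succ (Nat.lt_of_mul_lt_mul_left hcount)

lemma IsRegularOfDegree.ncard_lt_ncard_iUnion_neighborSet (hreg : G.IsRegularOfDegree k)
    (hbip : G.IsBipartiteWith V1 V2) (hconn : G.Preconnected) {s : Set V} (hs : s ⊆ V1)
    (hne : s.Nonempty) {u : V} (hu : u ∈ V1 \ s) :
    s.ncard < (⋃ x ∈ s, G.neighborSet x).ncard := by
  classical
  have hNV2 := hbip.iUnion_neighborSet_subset hs
  lift s to Finset V using s.toFinite
  set T := s.biUnion fun x => G.neighborFinset x
  rw [iUnion_neighborSet_eq_coe_biUnion] at hNV2 ⊢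
  rw [ncard_coe_finset, ncard_coe_finset]
  by_contra! hle
  have hsT : (s.biUnion fun a => G.incidenceFinset a) ⊆
      T.biUnion fun b => G.incidenceFinset b := by
    intro e he
    obtain ⟨a, ha, b, hab, rfl⟩ := mem_biUnion_incidenceFinset.1 he
    have hbT : b ∈ T := Finset.mem_biUnion.2 ⟨a, ha, by simpa using hab⟩
    exact mem_biUnion_incidenceFinset.2 ⟨b, hbT, a, hab.symm, Sym2.eq_swap⟩
  -- in the tight case every edge at `T` already has its other end in `s`
  have hTs :
      (T.biUnion fun b => G.incidenceFinset b) = s.biUnion fun a => G.incidenceFinset a :=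
    (Finset.eq_of_subset_of_card_le hsT (by
      rw [hreg.card_biUnion_incidenceFinset hbip hs,
        hreg.card_biUnion_incidenceFinset hbip.symm hNV2]
      exact Nat.mul_le_mul_left k hle)).symm
  have hclosed : ∀ x y, G.Adj x y → x ∈ (s : Set V) ∪ T → y ∈ (s : Set V) ∪ T := by
    rintro x y hxy (hx | hx)
    · exact Or.inr (Finset.mem_biUnion.2 ⟨x, hx, by simpa using hxy⟩)
    · have hxy' : s(x, y) ∈ T.biUnion fun b => G.incidenceFinset b :=
        mem_biUnion_incidenceFinset.2 ⟨x, hx, y, hxy, rfl⟩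
      rw [hTs] at hxy'
      obtain ⟨a, ha, b, -, hab⟩ := mem_biUnion_incidenceFinset.1 hxy'
      rcases Sym2.eq_iff.1 hab with ⟨rfl, -⟩ | ⟨-, rfl⟩
      · exact (hbip.disjoint.notMem_of_mem_left (hs ha) (hNV2 hx)).elim
      · exact Or.inl ha
  obtain ⟨a, ha⟩ := hne
  rcases hconn.mem_of_forall_adj hclosed (Or.inl ha) (b := u) with h | h
  · exact hu.2 h
  · exact hbip.disjoint.notMem_of_mem_left hu.1 (hNV2 h)

end SimpleGraph

section StrongMatchingPreclusion

variable {V : Type*} {G : SimpleGraph V} {V1 V2 : Set V}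

lemma Bipartition.isBipartiteWith (hbip : Bipartition G V1 V2) : G.IsBipartiteWith V1 V2 :=
  ⟨hbip.1, hbip.2.2⟩

lemma Bipartition.symm (hbip : Bipartition G V1 V2) : Bipartition G V2 V1 :=
  ⟨hbip.1.symm, union_comm V1 V2 ▸ hbip.2.1, hbip.isBipartiteWith.symm.mem_of_adj⟩

lemma Bipartition.mem_or_mem (hbip : Bipartition G V1 V2) (v : V) : v ∈ V1 ∨ v ∈ V2 :=
  eq_univ_iff_forall.1 hbip.2.1 v

variable [Fintype V] [DecidableRel G.Adj] {k : ℕ}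

lemma Bipartition.le_ncard_of_isRegularOfDegree [Nonempty V] (hbip : Bipartition G V1 V2)
    (hreg : G.IsRegularOfDegree k) (hk : 0 < k) : k ≤ V1.ncard := by
  obtain ⟨x⟩ := ‹Nonempty V›
  have hdeg : (G.neighborSet x).ncard = k := by
    rw [ncard_eq_toFinset_card', ← SimpleGraph.neighborFinset_def,
      SimpleGraph.card_neighborFinset_eq_degree, hreg.degree_eq]
  rcases hbip.mem_or_mem x with hx | hx
  · rw [hreg.ncard_eq_ncard hk hbip.isBipartiteWith, ← hdeg]
    exact ncard_le_ncard (SimpleGraph.isBipartiteWith_neighborSet_subset hbip.isBipartiteWith hx)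
  · rw [← hdeg]
    exact ncard_le_ncard
      (SimpleGraph.isBipartiteWith_neighborSet_subset hbip.isBipartiteWith.symm hx)

lemma isSMPSet_pair (hreg : G.IsRegularOfDegree k) (hk : 0 < k) (hbip : Bipartition G V1 V2)
    {u u' : V} (hu : u ∈ V1) (hu' : u' ∈ V1) (hne : u ≠ u') : IsSMPSet G {u, u'} ∅ := by
  refine ⟨empty_subset _, ?_⟩
  rw [SimpleGraph.deleteEdges_empty]
  have hS : {u, u'} ⊆ V1 := insert_subset hu (singleton_subset_iff.2 hu')
  apply hasNoMatchings_induce_compl_of_ncard_add_two_le hbip.isBipartiteWith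
  rw [ncard_sdiff hS, ncard_pair hne, (hbip.1.symm.mono_right hS).sdiff_eq_left,
    ← hreg.ncard_eq_ncard hk hbip.isBipartiteWith]
  have := ncard_le_ncard hS
  rw [ncard_pair hne] at this
  omega

lemma not_isSMPSet_of_ncard_le_one (hreg : G.IsRegularOfDegree k) (hbip : Bipartition G V1 V2)
    {S : Set V} {F : Set (Sym2 V)} (hS : S.ncard ≤ 1) (hF : F.ncard < k) : ¬IsSMPSet G S F := by
  wlog hSV1 : S ⊆ V1 generalizing V1 V2
  · rcases (ncard_le_one_iff_eq (toFinite S)).1 hS with rfl | ⟨x, rfl⟩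
    · exact this hbip (empty_subset _)
    · refine this hbip.symm (singleton_subset_iff.2 ?_)
      exact (hbip.mem_or_mem x).resolve_left fun hx => hSV1 (singleton_subset_iff.2 hx)
  rintro ⟨-, hno⟩
  have hbipF := hbip.isBipartiteWith.mono (G.deleteEdges_le F)
  have hdisj : Disjoint V2 S := hbip.1.symm.mono_right hSV1
  refine not_hasNoMatchings_induce_compl_of_hall hbipF hbip.2.1 (fun s hs => ?_) ?_ hno
  · rw [(hdisj.mono_left (hbipF.iUnion_neighborSet_subset (hs.trans sdiff_subset))).sdiff_eq_left]
    exact hreg.ncard_le_ncard_iUnion_neighborSet_deleteEdges hbip.isBipartiteWith hF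
      (hs.trans sdiff_subset)
  · rw [hdisj.sdiff_eq_left, ncard_sdiff hSV1,
      ← hreg.ncard_eq_ncard (by omega) hbip.isBipartiteWith]
    have := ncard_le_ncard hSV1
    omega

lemma not_isSMPSet_pair (hreg : G.IsRegularOfDegree k) (hk : 0 < k)
    (hbip : Bipartition G V1 V2) (hconn : G.Preconnected) {u v : V} (hu : u ∈ V1) (hv : v ∈ V2) :
    ¬IsSMPSet G {u, v} ∅ := by
  rintro ⟨-, hno⟩
  rw [SimpleGraph.deleteEdges_empty] at hno
  have hu2 : u ∉ V2 := hbip.1.notMem_of_mem_left hu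
  have hv1 : v ∉ V1 := hbip.1.notMem_of_mem_right hv
  refine not_hasNoMatchings_induce_compl_of_hall hbip.isBipartiteWith hbip.2.1
    (fun s hs => ?_) ?_ hno
  · rcases s.eq_empty_or_nonempty with rfl | hne
    · simp
    have hs1 : s ⊆ V1 := hs.trans sdiff_subset
    have hlt := hreg.ncard_lt_ncard_iUnion_neighborSet hbip.isBipartiteWith hconn hs1 hne
      ⟨hu, fun h => (hs h).2 (mem_insert u _)⟩
    rw [sdiff_insert_of_notMem fun h =>
      hu2 (hbip.isBipartiteWith.iUnion_neighborSet_subset hs1 h)]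
    have := pred_ncard_le_ncard_sdiff_singleton (⋃ x ∈ s, G.neighborSet x) v
    omega
  · rw [sdiff_insert_of_notMem hu2, pair_comm, sdiff_insert_of_notMem hv1,
      ncard_sdiff_singleton_of_mem hu, ncard_sdiff_singleton_of_mem hv,
      hreg.ncard_eq_ncard hk hbip.isBipartiteWith]
    omega

end StrongMatchingPreclusion

theorem smp_regular_bipartite_general {V : Type*} [Fintype V] (G : SimpleGraph V) (k : ℕ)
    (hk : 3 ≤ k) (hreg : ∀ v : V, (G.neighborSet v).ncard = k) (hconn : G.Connected)
    (V1 V2 : Set V) (hbip : Bipartition G V1 V2) :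
    IsLeast {m : ℕ | ∃ (S : Set V) (F : Set (Sym2 V)),
        IsSMPSet G S F ∧ m = S.ncard + F.ncard} 2 ∧
    ∀ (S : Set V) (F : Set (Sym2 V)), IsSMPSet G S F → S.ncard + F.ncard = 2 →
      F = ∅ ∧ ∃ u v : V, u ≠ v ∧ S = {u, v} ∧
        ((u ∈ V1 ∧ v ∈ V1) ∨ (u ∈ V2 ∧ v ∈ V2)) := by
  classical
  have hreg := SimpleGraph.isRegularOfDegree_of_ncard_neighborSet hreg
  have hV : Nonempty V := hconn.nonempty
  refine ⟨⟨?_, fun m ⟨S, F, hSF, hm⟩ => ?_⟩, fun S F hSF hcard => ?_⟩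
  · have hV1 := hbip.le_ncard_of_isRegularOfDegree hreg (by omega)
    obtain ⟨u, hu, u', hu', hne⟩ := (one_lt_ncard (toFinite V1)).1 (by omega)
    exact ⟨{u, u'}, ∅, isSMPSet_pair hreg (by omega) hbip hu hu' hne,
      by rw [ncard_pair hne, ncard_empty]⟩
  · by_contra! hm2
    exact not_isSMPSet_of_ncard_le_one hreg hbip (by omega) (by omega) hSF
  obtain hS | hS : S.ncard ≤ 1 ∨ S.ncard = 2 := by omega
  · exact (not_isSMPSet_of_ncard_le_one hreg hbip hS (by omega) hSF).elim
  obtain rfl : F = ∅ := (ncard_eq_zero (toFinite F)).1 (by omega)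
  obtain ⟨u, v, huv, rfl⟩ := ncard_eq_two.1 hS
  refine ⟨rfl, u, v, huv, rfl, ?_⟩
  have hmixed {a b : V} (ha : a ∈ V1) (hb : b ∈ V2) : ¬IsSMPSet G {a, b} ∅ :=
    not_isSMPSet_pair hreg (by omega) hbip hconn.preconnected ha hb
  rcases hbip.mem_or_mem u with hu | hu <;> rcases hbip.mem_or_mem v with hv | hv
  · exact Or.inl ⟨hu, hv⟩
  · exact (hmixed hu hv hSF).elim
  · exact (hmixed hv hu (pair_comm u v ▸ hSF)).elim
  · exact Or.inr ⟨hu, hv⟩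

/-- Let `G` be a connected, bipartite, `k`-regular finite simple graph with `k ≥ 3`,
with bipartition classes `V₁, V₂` (both nonempty). Then `smp(G) = 2` and every optimal
strong matching preclusion set of `G` is a set of two vertices from the same
bipartition class. -/
theorem smp_regular_bipartite {V : Type*} [Fintype V] (G : SimpleGraph V) (k : ℕ)
    (hk : 3 ≤ k) (hreg : ∀ v : V, (G.neighborSet v).ncard = k) (hconn : G.Connected)
    (V1 V2 : Set V) (hbip : Bipartition G V1 V2) (h1 : V1.Nonempty) (h2 : V2.Nonempty) :
    IsLeast {m : ℕ | ∃ (S : Set V) (F : Set (Sym2 V)),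
        IsSMPSet G S F ∧ m = S.ncard + F.ncard} 2 ∧
    ∀ (S : Set V) (F : Set (Sym2 V)), IsSMPSet G S F → S.ncard + F.ncard = 2 →
      F = ∅ ∧ ∃ u v : V, u ≠ v ∧ S = {u, v} ∧
        ((u ∈ V1 ∧ v ∈ V1) ∨ (u ∈ V2 ∧ v ∈ V2)) :=
  smp_regular_bipartite_general G k hk hreg hconn V1 V2 hbip
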